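/- arXiv:2205.15548 — 3 statements merged into one kernel-verified Lean document; each statement's English description precedes it below -/
import Mathlib

section
/- Let U ∈ ℝ^{M×r} have orthonormal columns, and suppose x = U a + s where s ∈ ℝ^M has exactly m nonzero entries. Define γ(U) = 1 / min_{h∈S^{r−1}} ‖U h‖₁, μ(U) as the square root of max_i ‖e_iᵀU‖₂²/r, and κ(U) = μ(U)·γ(U). If κ(U) < 1/(2 m √r), then a is the unique minimizer of the function ȧ ↦ ‖x − U ȧ‖₁. -/
open Matrix Finset

private lemma abs_inner_le_sqrt {n : ℕ} (f g : Fin n → ℝ) :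
    |∑ k, f k * g k| ≤ Real.sqrt (∑ k, f k ^ 2) * Real.sqrt (∑ k, g k ^ 2) := by
  have h := Finset.sum_mul_sq_le_sq_mul_sq Finset.univ f g
  calc |∑ k, f k * g k| = Real.sqrt ((∑ k, f k * g k) ^ 2) := (Real.sqrt_sq_eq_abs _).symm
    _ ≤ Real.sqrt ((∑ k, f k ^ 2) * ∑ k, g k ^ 2) := Real.sqrt_le_sqrt h
    _ = _ := Real.sqrt_mul (Finset.sum_nonneg fun k _ => sq_nonneg _) _

/-- Lemma 1: if κ(U) = μ(U)γ(U) < 1/(2m√r) then the coefficient vector a is the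
unique minimizer of ȧ ↦ ‖x − U ȧ‖₁, where x = U a + s and s has m nonzero entries. -/
theorem l1_projection_exact_recovery
    (M r m : ℕ)
    (U : Matrix (Fin M) (Fin r) ℝ)
    (hU : Uᵀ * U = 1)
    (a : Fin r → ℝ) (s x : Fin M → ℝ)
    (hx : x = U.mulVec a + s)
    (hm : (Finset.univ.filter (fun i => s i ≠ 0)).card = m)
    (mu gam : ℝ) (hmu_nonneg : 0 ≤ mu) (hgam_pos : 0 < gam)
    -- μ(U): every row satisfies ‖u_i‖₂ ≤ √r · μ(U)
    (hmu : ∀ i : Fin M, Real.sqrt (∑ k, (U i k) ^ 2) ≤ Real.sqrt r * mu)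
    -- γ(U) = 1 / min_{h ∈ S^{r-1}} ‖U h‖₁
    (hgam : ∀ h : Fin r → ℝ, (∑ k, (h k) ^ 2) = 1 →
      1 / gam ≤ ∑ i, |∑ k, U i k * h k|)
    -- κ(U) = μ(U)·γ(U) < 1/(2 m √r)
    (hkappa : mu * gam < 1 / (2 * m * Real.sqrt r)) :
    ∀ b : Fin r → ℝ, b ≠ a →
      (∑ i, |x i - U.mulVec a i|) < ∑ i, |x i - U.mulVec b i| := by
  intro b hb
  -- degenerate case: 2 m √r = 0 contradicts hkappa
  by_cases hdeg : 2 * (m : ℝ) * Real.sqrt r = 0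
  · exfalso
    rw [hdeg, div_zero] at hkappa
    nlinarith [mul_nonneg hmu_nonneg hgam_pos.le]
  have hpos : 0 < 2 * (m : ℝ) * Real.sqrt r := by
    rcases lt_or_eq_of_le (by positivity : (0:ℝ) ≤ 2 * (m : ℝ) * Real.sqrt r) with h | h
    · exact h
    · exact absurd h.symm hdeg
  -- key scalar inequality: 2 m √r · mu < 1/gam
  have hkey : 2 * (m : ℝ) * Real.sqrt r * mu < 1 / gam := by
    rw [lt_div_iff₀ hpos] at hkappa
    rw [lt_div_iff₀ hgam_pos]
    nlinarith
  set h : Fin r → ℝ := fun k => a k - b k with hh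
  set v : Fin M → ℝ := fun i => ∑ k, U i k * h k with hv
  have hsa : ∀ i, x i - U.mulVec a i = s i := by
    intro i; simp [hx]
  have hsb : ∀ i, x i - U.mulVec b i = s i + v i := by
    intro i
    have : U.mulVec a i - U.mulVec b i = v i := by
      simp [Matrix.mulVec, dotProduct, hv, hh, mul_sub, Finset.sum_sub_distrib]
    simp only [hx, Pi.add_apply]
    linarith
  -- norm of h
  have hsum_pos : 0 < ∑ k, h k ^ 2 := by
    obtain ⟨k, hk⟩ := Function.ne_iff.mp hb
    have hk' : 0 < h k ^ 2 := by
      have : h k ≠ 0 := sub_ne_zero.mpr (Ne.symm hk)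
      positivity
    exact lt_of_lt_of_le hk' (Finset.single_le_sum (fun j _ => sq_nonneg (h j)) (mem_univ k))
  set n : ℝ := Real.sqrt (∑ k, h k ^ 2) with hn
  have hn_pos : 0 < n := Real.sqrt_pos.mpr hsum_pos
  have hn_sq : n ^ 2 = ∑ k, h k ^ 2 := Real.sq_sqrt hsum_pos.le
  -- lower bound on ∑|v i| via hgam applied to h/n
  have hl1 : n / gam ≤ ∑ i, |v i| := by
    have hunit : (∑ k, (h k / n) ^ 2) = 1 := by
      simp_rw [div_pow, ← Finset.sum_div]
      rw [← hn_sq, div_self (by positivity)]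
    have := hgam (fun k => h k / n) hunit
    have heq : ∀ i, |∑ k, U i k * (h k / n)| = |v i| / n := by
      intro i
      have he : ∑ k, U i k * (h k / n) = v i / n := by
        rw [hv, Finset.sum_div]
        exact Finset.sum_congr rfl fun k _ => (mul_div_assoc _ _ _).symm
      rw [he, abs_div, abs_of_pos hn_pos]
    have this2 : 1 / gam ≤ (∑ i, |v i|) / n := by
      calc 1 / gam ≤ ∑ i, |∑ k, U i k * (h k / n)| := this
        _ = ∑ i, |v i| / n := Finset.sum_congr rfl fun i _ => heq i
        _ = (∑ i, |v i|) / n := by rw [Finset.sum_div]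
    rw [div_le_div_iff₀ hgam_pos hn_pos] at this2
    rw [div_le_iff₀ hgam_pos]
    linarith
  -- pointwise upper bound on |v i|
  have hvb : ∀ i, |v i| ≤ Real.sqrt r * mu * n := by
    intro i
    calc |v i| ≤ Real.sqrt (∑ k, (U i k) ^ 2) * Real.sqrt (∑ k, h k ^ 2) :=
          abs_inner_le_sqrt _ _
      _ ≤ Real.sqrt r * mu * n := by
          rw [← hn]
          exact mul_le_mul_of_nonneg_right (hmu i) hn_pos.le
  -- support set
  set T := Finset.univ.filter (fun i => s i ≠ 0) with hT
  have hTsum : ∑ i ∈ T, |v i| ≤ (m : ℝ) * (Real.sqrt r * mu * n) := by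
    calc ∑ i ∈ T, |v i| ≤ ∑ i ∈ T, (Real.sqrt r * mu * n) :=
          Finset.sum_le_sum fun i _ => hvb i
      _ = (m : ℝ) * (Real.sqrt r * mu * n) := by
          rw [Finset.sum_const, hm, nsmul_eq_mul]
  -- split sums over T and its complement
  have hsplit : ∀ f : Fin M → ℝ,
      ∑ i, f i = ∑ i ∈ T, f i + ∑ i ∈ Finset.univ.filter (fun i => ¬ s i ≠ 0), f i := by
    intro f
    exact (Finset.sum_filter_add_sum_filter_not Finset.univ _ f).symm
  have hmain : ∑ i, |s i| + (∑ i, |v i| - 2 * ∑ i ∈ T, |v i|) ≤ ∑ i, |s i + v i| := by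
    rw [hsplit (fun i => |s i + v i|), hsplit (fun i => |s i|), hsplit (fun i => |v i|)]
    have h1 : ∑ i ∈ Finset.univ.filter (fun i => ¬ s i ≠ 0), |s i| = 0 := by
      apply Finset.sum_eq_zero
      intro i hi
      simp only [Finset.mem_filter, not_not] at hi
      simp [hi.2]
    have h2 : ∑ i ∈ Finset.univ.filter (fun i => ¬ s i ≠ 0), |s i + v i|
        = ∑ i ∈ Finset.univ.filter (fun i => ¬ s i ≠ 0), |v i| := by
      apply Finset.sum_congr rfl
      intro i hi
      simp only [Finset.mem_filter, not_not] at hi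
      simp [hi.2]
    have h3 : ∑ i ∈ T, (|s i| - |v i|) ≤ ∑ i ∈ T, |s i + v i| := by
      apply Finset.sum_le_sum
      intro i _
      have := abs_sub_abs_le_abs_sub (s i) (-v i)
      simp only [abs_neg, sub_neg_eq_add] at this
      linarith
    rw [Finset.sum_sub_distrib] at h3
    linarith
  -- put it together
  have hlhs : ∑ i, |x i - U.mulVec a i| = ∑ i, |s i| := by
    apply Finset.sum_congr rfl; intro i _; rw [hsa i]
  have hrhs : ∑ i, |x i - U.mulVec b i| = ∑ i, |s i + v i| := by
    apply Finset.sum_congr rfl; intro i _; rw [hsb i]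
  rw [hlhs, hrhs]
  have hgap : 2 * ∑ i ∈ T, |v i| < ∑ i, |v i| := by
    calc 2 * ∑ i ∈ T, |v i| ≤ 2 * ((m : ℝ) * (Real.sqrt r * mu * n)) := by linarith
      _ = (2 * (m : ℝ) * Real.sqrt r * mu) * n := by ring
      _ < (1 / gam) * n := by
          exact mul_lt_mul_of_pos_right hkey hn_pos
      _ = n / gam := by ring
      _ ≤ ∑ i, |v i| := hl1
  linarith
end

section
/- For i ∉ I_s, the residual ê(i) = |Σ_{j∈I_s} s(j)⟨u⊥_i, u⊥_j⟩| satisfies ê(i) ≤ r·μ²(U)·Σ_{j∈I_s}|s(j)|, where u⊥_i are rows of an orthonormal basis U⊥ of the orthogonal complement of the column space of U. -/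
open Matrix Finset

/-- Upper bound for the residual off the support: for i ∉ I_s,
ê(i) = |Σ_{j∈I_s} s(j)⟨u⊥_i, u⊥_j⟩| ≤ r·μ²(U)·Σ_{j∈I_s}|s(j)|. -/
theorem residual_upper_bound_off_support
    (M r : ℕ)
    (U : Matrix (Fin M) (Fin r) ℝ)
    (V : Matrix (Fin M) (Fin (M - r)) ℝ)
    (hU : Uᵀ * U = 1)
    (hV : Vᵀ * V = 1)
    (hperp : Uᵀ * V = 0)
    (hspan : U * Uᵀ + V * Vᵀ = 1)
    (s : Fin M → ℝ)
    (Is : Finset (Fin M)) (hIs : ∀ i, s i ≠ 0 ↔ i ∈ Is)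
    (mu2 : ℝ)
    -- μ²(U): every row satisfies ‖u_i‖₂² ≤ r · μ²(U)
    (hmu2 : ∀ i : Fin M, (∑ k, (U i k) ^ 2) ≤ r * mu2) :
    ∀ i ∉ Is,
      |∑ j ∈ Is, s j * (∑ k, V i k * V j k)| ≤ r * mu2 * ∑ j ∈ Is, |s j| := by
  intro i hi
  have hrmu : (0:ℝ) ≤ r * mu2 :=
    le_trans (Finset.sum_nonneg fun k _ => sq_nonneg _) (hmu2 i)
  -- key: for j ≠ i, |⟨V i, V j⟩| = |⟨U i, U j⟩| ≤ r * mu2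
  have key : ∀ j ∈ Is, |∑ k, V i k * V j k| ≤ r * mu2 := by
    intro j hj
    have hij : i ≠ j := fun h => hi (h ▸ hj)
    have hent := congrArg (fun A => A i j) hspan
    simp only [Matrix.add_apply, Matrix.mul_apply, Matrix.transpose_apply,
      Matrix.one_apply_ne hij] at hent
    have hVU : (∑ k, V i k * V j k) = -(∑ k, U i k * U j k) := by linarith
    rw [hVU, abs_neg]
    have hcs := Finset.sum_mul_sq_le_sq_mul_sq Finset.univ (fun k => U i k) (fun k => U j k)
    have h1 := hmu2 i
    have h2 := hmu2 j
    have h2' : (0:ℝ) ≤ ∑ k, (U j k)^2 := Finset.sum_nonneg fun k _ => sq_nonneg _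
    have hb : (∑ k, U i k * U j k)^2 ≤ (r * mu2)^2 := by
      calc (∑ k, U i k * U j k)^2 ≤ (∑ k, (U i k)^2) * (∑ k, (U j k)^2) := hcs
        _ ≤ (r * mu2) * (r * mu2) := mul_le_mul h1 h2 h2' hrmu
        _ = (r * mu2)^2 := (sq (r*mu2)).symm
    exact abs_le_of_sq_le_sq hb hrmu
  calc |∑ j ∈ Is, s j * (∑ k, V i k * V j k)|
      ≤ ∑ j ∈ Is, |s j * (∑ k, V i k * V j k)| := Finset.abs_sum_le_sum_abs _ _
    _ = ∑ j ∈ Is, |s j| * |∑ k, V i k * V j k| := by simp [abs_mul]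
    _ ≤ ∑ j ∈ Is, |s j| * (r * mu2) :=
        Finset.sum_le_sum fun j hj => mul_le_mul_of_nonneg_left (key j hj) (abs_nonneg _)
    _ = r * mu2 * ∑ j ∈ Is, |s j| := by rw [← Finset.sum_mul, mul_comm]
end

section
/- For i ∈ I_s, the residual ê(i) of x = U a + s under projection onto the column space of U satisfies ê(i) ≥ |s(i)| − r·μ²(U)·Σ_{j∈I_s}|s(j)|. -/
open Matrix Finset

/-- Lower bound for the residual on the support: for i ∈ I_s,
ê(i) ≥ |s(i)| − r·μ²(U)·Σ_{j∈I_s}|s(j)|. -/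
theorem residual_lower_bound_on_support
    (M r : ℕ)
    (U : Matrix (Fin M) (Fin r) ℝ)
    (hU : Uᵀ * U = 1)
    (a : Fin r → ℝ) (s x : Fin M → ℝ)
    (hx : x = U.mulVec a + s)
    (Is : Finset (Fin M)) (hIs : ∀ i, s i ≠ 0 ↔ i ∈ Is)
    (mu2 : ℝ)
    -- μ²(U): every row satisfies ‖u_i‖₂² ≤ r · μ²(U)
    (hmu2 : ∀ i : Fin M, (∑ k, (U i k) ^ 2) ≤ r * mu2) :
    ∀ i ∈ Is,
      |s i| - r * mu2 * (∑ j ∈ Is, |s j|) ≤ |x i - U.mulVec (Uᵀ.mulVec x) i| := by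
  intro i hi
  have hrmu : 0 ≤ (r : ℝ) * mu2 :=
    le_trans (Finset.sum_nonneg fun k _ => sq_nonneg (U i k)) (hmu2 i)
  -- simplify the residual
  have hres : x i - U.mulVec (Uᵀ.mulVec x) i
      = s i - ∑ j ∈ Is, (∑ k, U i k * U j k) * s j := by
    have h1 : Uᵀ.mulVec x = a + Uᵀ.mulVec s := by
      rw [hx, Matrix.mulVec_add, Matrix.mulVec_mulVec, hU, Matrix.one_mulVec]
    rw [h1, hx, Matrix.mulVec_add]
    have h2 : U.mulVec (Uᵀ.mulVec s) i = ∑ j ∈ Is, (∑ k, U i k * U j k) * s j := by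
      rw [Matrix.mulVec_mulVec]
      have : (U * Uᵀ).mulVec s i = ∑ j, (∑ k, U i k * U j k) * s j := by
        simp [Matrix.mulVec, Matrix.mul_apply, Matrix.transpose_apply, dotProduct]
      rw [this]
      refine (Finset.sum_subset (Finset.subset_univ Is) ?_).symm
      intro j _ hj
      have : s j = 0 := by
        by_contra h; exact hj ((hIs j).mp h)
      simp [this]
    simp only [Pi.add_apply]
    rw [h2]
    ring
  rw [hres]
  -- bound the coefficient
  have hcoef : ∀ j : Fin M, |∑ k, U i k * U j k| ≤ r * mu2 := by
    intro j
    have h1 : |∑ k, U i k * U j k| ≤ ∑ k, |U i k| * |U j k| := by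
      refine le_trans (Finset.abs_sum_le_sum_abs _ _) (le_of_eq ?_)
      simp [abs_mul]
    have h2 : ∑ k, |U i k| * |U j k|
        ≤ Real.sqrt (∑ k, |U i k| ^ 2) * Real.sqrt (∑ k, |U j k| ^ 2) :=
      Real.sum_mul_le_sqrt_mul_sqrt Finset.univ _ _
    have h3 : ∀ m : Fin M, Real.sqrt (∑ k, |U m k| ^ 2) ≤ Real.sqrt (r * mu2) := by
      intro m
      apply Real.sqrt_le_sqrt
      simpa [sq_abs] using hmu2 m
    calc |∑ k, U i k * U j k| ≤ Real.sqrt (∑ k, |U i k| ^ 2) * Real.sqrt (∑ k, |U j k| ^ 2) :=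
          le_trans h1 h2
      _ ≤ Real.sqrt (r * mu2) * Real.sqrt (r * mu2) :=
          mul_le_mul (h3 i) (h3 j) (Real.sqrt_nonneg _) (Real.sqrt_nonneg _)
      _ = r * mu2 := Real.mul_self_sqrt hrmu
  have hsum : |∑ j ∈ Is, (∑ k, U i k * U j k) * s j| ≤ r * mu2 * ∑ j ∈ Is, |s j| := by
    calc |∑ j ∈ Is, (∑ k, U i k * U j k) * s j|
        ≤ ∑ j ∈ Is, |(∑ k, U i k * U j k) * s j| := Finset.abs_sum_le_sum_abs _ _
      _ ≤ ∑ j ∈ Is, r * mu2 * |s j| := by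
          refine Finset.sum_le_sum fun j _ => ?_
          rw [abs_mul]
          exact mul_le_mul_of_nonneg_right (hcoef j) (abs_nonneg _)
      _ = r * mu2 * ∑ j ∈ Is, |s j| := by rw [Finset.mul_sum]
  have := abs_sub_abs_le_abs_sub (s i) (∑ j ∈ Is, (∑ k, U i k * U j k) * s j)
  linarith
end
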